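/- arXiv:2109.08658 — 2 statements merged into one kernel-verified Lean document; each statement's English description precedes it below -/
import Mathlib

section
/- Let α ∈ ℝ^{d+1} be strictly increasing and let LodAsso(α) := convexHull{ v_T^α : T a plane binary tree with d+1 internal nodes } ⊆ ℝ^{d+1}. Then: (1) the points v_T^α are pairwise distinct, the set of extreme points of LodAsso(α) is exactly { v_T^α : T a plane binary tree with d+1 internal nodes }, and the affine span of LodAsso(α) is the hyperplane {x ∈ ℝ^{d+1} : Σ_{i=1}^{d+1} x_i = Σ_{i=1}^{d+1} α_i}; (2) for each plane binary tree T with d+1 internal nodes, {w ∈ ℝ^{d+1} : ⟨w, v_T^α⟩ ≥ ⟨w, p⟩ for all p ∈ LodAsso(α)} = {w ∈ ℝ^{d+1} : w_i ≤ w_j whenever i ≼_T j}. -/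
/-- A plane binary tree: either a leaf or an ordered pair of plane binary trees. -/
inductive PBTree : Type
  | leaf : PBTree
  | node : PBTree → PBTree → PBTree
  deriving DecidableEq

namespace PBTree

/-- The number of internal nodes of a plane binary tree. -/
def nodes : PBTree → ℕ
  | leaf => 0
  | node l r => nodes l + nodes r + 1

/-- `anc T i j` means that the internal node of `T` with in-order (1-based) label `j`
lies on the path from the internal node labeled `i` to the root (inclusive);
this is the relation `i ≼_T j`. -/
def anc : PBTree → ℕ → ℕ → Prop
  | leaf, _, _ => False
  | node l r, i, j =>
      (j = nodes l + 1 ∧ 1 ≤ i ∧ i ≤ nodes l + nodes r + 1)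
      ∨ anc l i j
      ∨ anc r (i - (nodes l + 1)) (j - (nodes l + 1))

/-- The in-order label of the root of a plane binary tree (`0` for a leaf). -/
def rootLabel : PBTree → ℕ
  | leaf => 0
  | node l _ => nodes l + 1

/-- `childOf T i j` : the internal node of `T` labeled `i` is a child of the internal
node labeled `j` (labels are 1-based, in in-order). -/
def childOf : PBTree → ℕ → ℕ → Prop
  | leaf, _, _ => False
  | node l r, i, j =>
      (j = nodes l + 1 ∧
        ((l ≠ leaf ∧ i = rootLabel l) ∨ (r ≠ leaf ∧ i = nodes l + 1 + rootLabel r)))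
      ∨ childOf l i j
      ∨ childOf r (i - (nodes l + 1)) (j - (nodes l + 1))

/-- The subtree of `T` rooted at the internal node with (1-based, in-order) label `i`
(the result is a leaf if `i` is out of range). -/
def subtreeAt : PBTree → ℕ → PBTree
  | leaf, _ => leaf
  | node l r, i =>
      if i = nodes l + 1 then node l r
      else if i ≤ nodes l then subtreeAt l i
      else subtreeAt r (i - (nodes l + 1))

/-- `val α S := Σ_{k=1}^{t} α_k − Σ_{k=1}^{a} α_k − Σ_{k=1}^{b} α_k` where `t`, `a`, `b` are
the numbers of internal nodes of `S`, of its left subtree and of its right subtree. -/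
def val (α : ℕ → ℝ) : PBTree → ℝ
  | leaf => 0
  | node l r =>
      (∑ k ∈ Finset.Icc 1 (nodes l + nodes r + 1), α k)
        - (∑ k ∈ Finset.Icc 1 (nodes l), α k) - (∑ k ∈ Finset.Icc 1 (nodes r), α k)

end PBTree

/-- The vector `v_T^α ∈ ℝ^n`: its coordinate of (0-based) index `i` is
`val(α, T_(i+1))`, the value of the subtree rooted at the internal node labeled `i+1`. -/
def lodayVec (n : ℕ) (α : ℕ → ℝ) (T : PBTree) : Fin n → ℝ :=
  fun i => PBTree.val α (T.subtreeAt (i.1 + 1))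

/-- The vertex candidates of the Loday associahedron `LodAsso(α)`. -/
def lodayVerts (d : ℕ) (α : ℕ → ℝ) : Set (Fin (d + 1) → ℝ) :=
  {x | ∃ T : PBTree, T.nodes = d + 1 ∧ x = lodayVec (d + 1) α T}

/-!
Pairing a weight vector `w` with `v_T^α` gives `∑ⱼ w j * val(α, T_(j))`. Rotating `T` at a node
changes this pairing by `c * (w a - w b)`, where `a` and `b` are the two nodes exchanged and
`c > 0` because `α` is strictly increasing. If `w` is monotone along `≼_T`, any tree `S` of the
same size is turned into `T` by rotating the root label of `T` up to the root of `S` (every rotation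
lifts a heavier node, so the pairing does not drop) and recursing into the two subtrees; for
strictly monotone `w`, such as minus the depth in `T`, some step is strict when `S ≠ T`. Conversely,
if `T` maximizes the pairing, the rotations at its root show that `w` is monotone along `≼_T`.
This gives the normal cones, the extreme points and injectivity. The affine span is the whole
hyperplane: a linear form constant on all vertices has both `w` and `-w` in a normal cone, so `w`
is constant.
-/

open Finset

namespace PBTree

variable {α w : ℕ → ℝ} {l r : PBTree} {i j : ℕ}

lemma eq_leaf_of_nodes_eq_zero : ∀ {S : PBTree}, S.nodes = 0 → S = leaf
  | leaf, _ => rfl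
  | node _ _, h => by simp [nodes] at h

lemma exists_nodes_eq : ∀ n : ℕ, ∃ T : PBTree, T.nodes = n
  | 0 => ⟨leaf, rfl⟩
  | n + 1 =>
    let ⟨T, hT⟩ := exists_nodes_eq n
    ⟨node T leaf, by simp [nodes, hT]⟩

lemma anc_bounds : ∀ {T : PBTree} {i j : ℕ}, T.anc i j →
    1 ≤ i ∧ i ≤ T.nodes ∧ 1 ≤ j ∧ j ≤ T.nodes
  | leaf, _, _, h => h.elim
  | node l r, i, j, h => by
    rcases h with ⟨rfl, h1, h2⟩ | h | h
    · simp only [nodes]; omega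
    · have := anc_bounds h
      simp only [nodes]; omega
    · have := anc_bounds h
      simp only [nodes]; omega

lemma anc_node_root (h1 : 1 ≤ i) (h2 : i ≤ (node l r).nodes) :
    (node l r).anc i (l.nodes + 1) :=
  Or.inl ⟨rfl, h1, h2⟩

lemma anc_node_left (h : l.anc i j) : (node l r).anc i j :=
  Or.inr (Or.inl h)

lemma anc_node_right (h : r.anc i j) : (node l r).anc (l.nodes + 1 + i) (l.nodes + 1 + j) :=
  Or.inr (Or.inr (by simpa using h))

def depth : PBTree → ℕ → ℕ
  | leaf, _ => 0
  | node l r, i =>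
      if i = l.nodes + 1 then 0
      else if i ≤ l.nodes then l.depth i + 1
      else r.depth (i - (l.nodes + 1)) + 1

lemma depth_lt_of_anc : ∀ {T : PBTree} {i j : ℕ}, T.anc i j → i ≠ j → T.depth j < T.depth i
  | leaf, _, _, h, _ => h.elim
  | node l r, i, j, h, hne => by
    rcases h with ⟨rfl, -, -⟩ | h | h
    · simp only [depth]
      split_ifs <;> omega
    · have := anc_bounds h
      have := depth_lt_of_anc h hne
      simp only [depth]
      split_ifs <;> omega
    · have := anc_bounds h
      have := depth_lt_of_anc h (by omega)
      simp only [depth]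
      split_ifs <;> omega

def MonotoneFor (T : PBTree) (w : ℕ → ℝ) : Prop :=
  ∀ i j, T.anc i j → w i ≤ w j

def StrictMonoFor (T : PBTree) (w : ℕ → ℝ) : Prop :=
  ∀ i j, T.anc i j → i ≠ j → w i < w j

lemma monotoneFor_node_iff : MonotoneFor (node l r) w ↔
    (∀ i, 1 ≤ i → i ≤ (node l r).nodes → w i ≤ w (l.nodes + 1)) ∧ MonotoneFor l w ∧
      MonotoneFor r (fun k => w (l.nodes + 1 + k)) := by
  refine ⟨fun h => ⟨fun i h1 h2 => h _ _ (anc_node_root h1 h2),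
    fun i j hij => h _ _ (anc_node_left hij), fun i j hij => h _ _ (anc_node_right hij)⟩, ?_⟩
  rintro ⟨hroot, hl, hr⟩ i j (⟨rfl, h1, h2⟩ | hij | hij)
  · exact hroot i h1 h2
  · exact hl i j hij
  · have := anc_bounds hij
    have := hr _ _ hij
    simp only at this
    rwa [Nat.add_sub_cancel' (by omega), Nat.add_sub_cancel' (by omega)] at this

lemma StrictMonoFor.monotoneFor {T : PBTree} (h : StrictMonoFor T w) : MonotoneFor T w :=
  fun i j hij => (eq_or_ne i j).elim (fun e => e ▸ le_rfl) fun hne => (h i j hij hne).le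

lemma StrictMonoFor.left (h : StrictMonoFor (node l r) w) : StrictMonoFor l w :=
  fun i j hij => h i j (anc_node_left hij)

lemma StrictMonoFor.right (h : StrictMonoFor (node l r) w) :
    StrictMonoFor r (fun k => w (l.nodes + 1 + k)) :=
  fun i j hij hne => h _ _ (anc_node_right hij) (by omega)

lemma StrictMonoFor.lt_root (h : StrictMonoFor (node l r) w) (h1 : 1 ≤ i)
    (h2 : i ≤ (node l r).nodes) (hne : i ≠ l.nodes + 1) : w i < w (l.nodes + 1) :=
  h _ _ (anc_node_root h1 h2) hne

lemma strictMonoFor_neg_depth (T : PBTree) : StrictMonoFor T (fun k => -(T.depth k : ℝ)) :=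
  fun _ _ hij hne => neg_lt_neg (Nat.cast_lt.2 (depth_lt_of_anc hij hne))

lemma sum_Icc_add_sub_sum_Icc (α : ℕ → ℝ) (t : ℕ) : ∀ m : ℕ,
    ∑ k ∈ Icc 1 (t + m), α k - ∑ k ∈ Icc 1 t, α k = ∑ k ∈ range m, α (t + k + 1)
  | 0 => by simp
  | m + 1 => by
    rw [← add_assoc, sum_Icc_succ_top (by omega), sum_range_succ,
      ← sum_Icc_add_sub_sum_Icc α t m]
    ring

lemma sum_Icc_sub_lt {N s t m : ℕ} (hα : StrictMonoOn α (Set.Icc 1 N)) (hst : s < t)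
    (hm : 0 < m) (htm : t + m ≤ N) :
    ∑ k ∈ Icc 1 (s + m), α k - ∑ k ∈ Icc 1 s, α k <
      ∑ k ∈ Icc 1 (t + m), α k - ∑ k ∈ Icc 1 t, α k := by
  rw [sum_Icc_add_sub_sum_Icc, sum_Icc_add_sub_sum_Icc]
  refine sum_lt_sum_of_nonempty (nonempty_range_iff.2 hm.ne') fun k hk => ?_
  rw [mem_range] at hk
  exact hα ⟨by omega, by omega⟩ ⟨by omega, by omega⟩ (by omega)

lemma val_node_eq {A A' B B' : PBTree} (hA : A.nodes = A'.nodes) (hB : B.nodes = B'.nodes) :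
    val α (node A B) = val α (node A' B') := by
  simp only [val, hA, hB]

lemma val_rotate {P Q B : PBTree} :
    val α (node (node P Q) B) + val α (node P Q) =
      val α (node P (node Q B)) + val α (node Q B) := by
  simp only [val, nodes]
  rw [show P.nodes + Q.nodes + 1 + B.nodes + 1 = P.nodes + (Q.nodes + B.nodes + 1) + 1 by omega]
  ring

lemma val_rotate_pos {P Q B : PBTree}
    (hα : StrictMonoOn α (Set.Icc 1 (node P (node Q B)).nodes)) :
    0 < val α (node P (node Q B)) - val α (node P Q) := by
  have := sum_Icc_sub_lt hα (s := Q.nodes) (t := Q.nodes + B.nodes + 1) (m := P.nodes + 1)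
    (by omega) (by omega) (by simp only [nodes]; omega)
  simp only [val, nodes]
  rw [show Q.nodes + (P.nodes + 1) = P.nodes + Q.nodes + 1 by omega,
    show Q.nodes + B.nodes + 1 + (P.nodes + 1) = P.nodes + (Q.nodes + B.nodes + 1) + 1 by omega]
    at this
  linarith

/-- `pairing α w T = ∑ⱼ w j * val α T_(j)` (see `pairing_eq_sum`), with `w` indexed by in-order
labels; the right subtree sees `w` shifted past the root. -/
def pairing (α : ℕ → ℝ) : (ℕ → ℝ) → PBTree → ℝ
  | _, leaf => 0
  | w, node l r =>
      pairing α w l + w (l.nodes + 1) * val α (node l r) +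
        pairing α (fun k => w (l.nodes + 1 + k)) r

lemma subtreeAt_node_of_le (h : i ≤ l.nodes) : (node l r).subtreeAt i = l.subtreeAt i := by
  rw [subtreeAt, if_neg (by omega), if_pos h]

lemma subtreeAt_node_root : (node l r).subtreeAt (l.nodes + 1) = node l r := by
  rw [subtreeAt, if_pos rfl]

lemma subtreeAt_node_add :
    (node l r).subtreeAt (l.nodes + 1 + (i + 1)) = r.subtreeAt (i + 1) := by
  rw [subtreeAt, if_neg (by omega), if_neg (by omega), Nat.add_sub_cancel_left]

lemma pairing_eq_sum (α : ℕ → ℝ) : ∀ (w : ℕ → ℝ) (T : PBTree),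
    pairing α w T = ∑ j ∈ range T.nodes, w (j + 1) * val α (T.subtreeAt (j + 1))
  | _, leaf => rfl
  | w, node l r => by
    rw [pairing, pairing_eq_sum α w l, pairing_eq_sum α _ r, nodes,
      show l.nodes + r.nodes + 1 = l.nodes + 1 + r.nodes by omega, sum_range_add, sum_range_succ,
      subtreeAt_node_root]
    congr 1
    · congr 1
      exact sum_congr rfl fun j hj => by
        rw [subtreeAt_node_of_le (by rw [mem_range] at hj; omega)]
    · exact sum_congr rfl fun j _ => by rw [add_assoc (l.nodes + 1), subtreeAt_node_add]

lemma pairing_one (α : ℕ → ℝ) :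
    ∀ T : PBTree, pairing α (fun _ => 1) T = ∑ k ∈ Icc 1 T.nodes, α k
  | leaf => by simp [pairing, nodes]
  | node l r => by
    rw [pairing, pairing_one α l, pairing_one α r, val, nodes]
    ring

lemma pairing_neg (α : ℕ → ℝ) : ∀ (w : ℕ → ℝ) (T : PBTree),
    pairing α (fun k => -w k) T = -pairing α w T
  | _, leaf => by simp [pairing]
  | w, node l r => by
    rw [pairing, pairing, pairing_neg α w l, pairing_neg α _ r]
    ring

lemma pairing_node_sub {A A' B B' : PBTree} (hA : A.nodes = A'.nodes) (hB : B.nodes = B'.nodes) :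
    pairing α w (node A B) - pairing α w (node A' B') =
      pairing α w A - pairing α w A' +
        (pairing α (fun k => w (A'.nodes + 1 + k)) B -
          pairing α (fun k => w (A'.nodes + 1 + k)) B') := by
  rw [pairing, pairing, val_node_eq hA hB, hA]
  ring

/-- The rotation exchanges the roots, labelled `P.nodes + 1` and `(node P Q).nodes + 1`. -/
lemma pairing_rotate (P Q B : PBTree) :
    pairing α w (node P (node Q B)) = pairing α w (node (node P Q) B) +
      (val α (node P (node Q B)) - val α (node P Q)) *
        (w (P.nodes + 1) - w ((node P Q).nodes + 1)) := by
  have hB : (fun k => w (P.nodes + 1 + (Q.nodes + 1 + k))) =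
      fun k => w ((node P Q).nodes + 1 + k) :=
    funext fun k => congrArg w (by simp only [nodes]; omega)
  have hroot : P.nodes + 1 + (Q.nodes + 1) = (node P Q).nodes + 1 := by simp only [nodes]; omega
  simp only [pairing, hB, hroot]
  linear_combination (-w ((node P Q).nodes + 1)) * val_rotate (α := α) (P := P) (Q := Q) (B := B)

section Rotation

variable {P Q B : PBTree} (hα : StrictMonoOn α (Set.Icc 1 (node P (node Q B)).nodes))
include hα

lemma pairing_rotate_le_iff :
    pairing α w (node (node P Q) B) ≤ pairing α w (node P (node Q B)) ↔
      w ((node P Q).nodes + 1) ≤ w (P.nodes + 1) := by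
  rw [pairing_rotate, le_add_iff_nonneg_right, mul_nonneg_iff_of_pos_left (val_rotate_pos hα),
    sub_nonneg]

lemma pairing_rotate_lt_iff :
    pairing α w (node (node P Q) B) < pairing α w (node P (node Q B)) ↔
      w ((node P Q).nodes + 1) < w (P.nodes + 1) := by
  rw [pairing_rotate, lt_add_iff_pos_right, mul_pos_iff_of_pos_left (val_rotate_pos hα), sub_pos]

end Rotation

/-- `node (S.splitAt ρ).1 (S.splitAt ρ).2` is `S` with the node labelled `ρ` rotated up to the
root. -/
def splitAt : PBTree → ℕ → PBTree × PBTree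
  | leaf, _ => (leaf, leaf)
  | node l r, ρ =>
      if ρ = l.nodes + 1 then (l, r)
      else if ρ ≤ l.nodes then ((splitAt l ρ).1, node (splitAt l ρ).2 r)
      else (node l (splitAt r (ρ - (l.nodes + 1))).1, (splitAt r (ρ - (l.nodes + 1))).2)

lemma splitAt_nodes : ∀ {S : PBTree} {ρ : ℕ}, 1 ≤ ρ → ρ ≤ S.nodes →
    (S.splitAt ρ).1.nodes = ρ - 1 ∧ (S.splitAt ρ).2.nodes = S.nodes - ρ
  | leaf, _, h1, h2 => by simp only [nodes] at h2; omega
  | node l r, ρ, h1, h2 => by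
    simp only [nodes] at h2
    rcases Nat.lt_trichotomy ρ (l.nodes + 1) with h | rfl | h
    · have := splitAt_nodes (S := l) h1 (by omega)
      simp only [splitAt, if_neg h.ne, if_pos (show ρ ≤ l.nodes by omega), nodes]
      omega
    · simp [splitAt, nodes]
    · have := splitAt_nodes (S := r) (ρ := ρ - (l.nodes + 1)) (by omega) (by omega)
      simp only [splitAt, if_neg h.ne', if_neg (show ¬ ρ ≤ l.nodes by omega), nodes]
      omega

section RotateUp

variable {ρ : ℕ} (hα : StrictMonoOn α (Set.Icc 1 (node l r).nodes))
  (hw : w (l.nodes + 1) ≤ w ρ)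
include hα hw

lemma pairing_le_rotate_of_left {A₁ A₂ : PBTree} (hA : (node A₁ A₂).nodes = l.nodes)
    (hρ : A₁.nodes + 1 = ρ) (hl : pairing α w l ≤ pairing α w (node A₁ A₂)) :
    pairing α w (node l r) ≤ pairing α w (node A₁ (node A₂ r)) ∧
      (w (l.nodes + 1) < w ρ → pairing α w (node l r) < pairing α w (node A₁ (node A₂ r))) := by
  have hsub := pairing_node_sub (α := α) (w := w) (B := r) hA.symm rfl
  have hα' : StrictMonoOn α (Set.Icc 1 (node A₁ (node A₂ r)).nodes) :=
    hα.mono (Set.Icc_subset_Icc_right (by simp only [nodes] at hA ⊢; omega))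
  have hle := pairing_rotate_le_iff (w := w) hα'
  have hlt := pairing_rotate_lt_iff (w := w) hα'
  rw [hA, hρ] at hle hlt
  exact ⟨by linarith [hle.2 hw], fun h => by linarith [hlt.2 h]⟩

lemma pairing_le_rotate_of_right {B₁ B₂ : PBTree} (hB : (node B₁ B₂).nodes = r.nodes)
    (hρ : (node l B₁).nodes + 1 = ρ)
    (hr : pairing α (fun k => w (l.nodes + 1 + k)) r ≤
      pairing α (fun k => w (l.nodes + 1 + k)) (node B₁ B₂)) :
    pairing α w (node l r) ≤ pairing α w (node (node l B₁) B₂) ∧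
      (w (l.nodes + 1) < w ρ → pairing α w (node l r) < pairing α w (node (node l B₁) B₂)) := by
  have hsub := pairing_node_sub (α := α) (w := w) (A := l) rfl hB.symm
  have hα' : StrictMonoOn α (Set.Icc 1 (node l (node B₁ B₂)).nodes) :=
    hα.mono (Set.Icc_subset_Icc_right (by simp only [nodes] at hB ⊢; omega))
  have hle := (pairing_rotate_lt_iff (w := w) hα').not
  have hlt := (pairing_rotate_le_iff (w := w) hα').not
  rw [hρ, not_lt, not_lt] at hle
  rw [hρ, not_le, not_le] at hlt
  exact ⟨by linarith [hle.2 hw], fun h => by linarith [hlt.2 h]⟩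

end RotateUp

lemma pairing_le_splitAt : ∀ {S : PBTree} {w : ℕ → ℝ} {ρ : ℕ},
    StrictMonoOn α (Set.Icc 1 S.nodes) → 1 ≤ ρ → ρ ≤ S.nodes →
    (∀ p, 1 ≤ p → p ≤ S.nodes → w p ≤ w ρ) →
    pairing α w S ≤ pairing α w (node (S.splitAt ρ).1 (S.splitAt ρ).2) ∧
      (w S.rootLabel < w ρ →
        pairing α w S < pairing α w (node (S.splitAt ρ).1 (S.splitAt ρ).2))
  | leaf, _, _, _, h1, h2, _ => by simp only [nodes] at h2; omega
  | node l r, w, ρ, hα, h1, h2, hmax => by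
    have hw : w (l.nodes + 1) ≤ w ρ := hmax _ (by omega) (by simp only [nodes]; omega)
    simp only [nodes] at h2
    rcases Nat.lt_trichotomy ρ (l.nodes + 1) with h | rfl | h
    · have ih := pairing_le_splitAt (S := l)
        (hα.mono (Set.Icc_subset_Icc_right (by simp only [nodes]; omega))) h1 (by omega)
        fun p hp1 hp2 => hmax p hp1 (by simp only [nodes]; omega)
      have hsize := splitAt_nodes (S := l) h1 (by omega)
      simp only [splitAt, if_neg h.ne, if_pos (show ρ ≤ l.nodes by omega)]
      exact pairing_le_rotate_of_left hα hw (by simp only [nodes]; omega) (by omega) ih.1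
    · rw [splitAt, if_pos rfl]
      exact ⟨le_rfl, fun h => absurd h (lt_irrefl _)⟩
    · have ih := pairing_le_splitAt (S := r) (w := fun k => w (l.nodes + 1 + k))
        (ρ := ρ - (l.nodes + 1))
        (hα.mono (Set.Icc_subset_Icc_right (by simp only [nodes]; omega))) (by omega) (by omega)
        fun p hp1 hp2 => by
          simp only [Nat.add_sub_cancel' h.le]
          exact hmax _ (by omega) (by simp only [nodes]; omega)
      have hsize := splitAt_nodes (S := r) (ρ := ρ - (l.nodes + 1)) (by omega) (by omega)
      simp only [splitAt, if_neg h.ne', if_neg (show ¬ ρ ≤ l.nodes by omega)]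
      exact pairing_le_rotate_of_right hα hw (by simp only [nodes]; omega)
        (by simp only [nodes]; omega) ih.1

theorem pairing_le_of_monotoneFor : ∀ {T S : PBTree} {w : ℕ → ℝ},
    StrictMonoOn α (Set.Icc 1 T.nodes) → S.nodes = T.nodes → MonotoneFor T w →
    pairing α w S ≤ pairing α w T
  | leaf, _, _, _, hS, _ => by rw [eq_leaf_of_nodes_eq_zero hS]
  | node L R, S, w, hα, hS, hw => by
    obtain ⟨hroot, hL, hR⟩ := monotoneFor_node_iff.1 hw
    have hS' : S.nodes = L.nodes + R.nodes + 1 := hS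
    obtain ⟨e₁, e₂⟩ := splitAt_nodes (S := S) (ρ := L.nodes + 1) (by omega) (by omega)
    have hsplit := (pairing_le_splitAt (hS ▸ hα) (by omega) (by omega)
      fun p h1 h2 => hroot p h1 (hS ▸ h2)).1
    have hsub := pairing_node_sub (α := α) (w := w) (A := (S.splitAt (L.nodes + 1)).1)
      (B := (S.splitAt (L.nodes + 1)).2) (A' := L) (B' := R) (by omega) (by omega)
    have ihL := pairing_le_of_monotoneFor (S := (S.splitAt (L.nodes + 1)).1)
      (hα.mono (Set.Icc_subset_Icc_right (by simp only [nodes]; omega))) (by omega) hL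
    have ihR := pairing_le_of_monotoneFor (S := (S.splitAt (L.nodes + 1)).2)
      (hα.mono (Set.Icc_subset_Icc_right (by simp only [nodes]; omega))) (by omega) hR
    linarith

theorem pairing_lt_of_strictMonoFor : ∀ {T S : PBTree} {w : ℕ → ℝ},
    StrictMonoOn α (Set.Icc 1 T.nodes) → S.nodes = T.nodes → S ≠ T → StrictMonoFor T w →
    pairing α w S < pairing α w T
  | leaf, _, _, _, hS, hne, _ => absurd (eq_leaf_of_nodes_eq_zero hS) hne
  | node _ _, leaf, _, _, hS, _, _ => by simp [nodes] at hS
  | node L R, node X Y, w, hα, hS, hne, hw => by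
    have hS' : X.nodes + Y.nodes + 1 = L.nodes + R.nodes + 1 := hS
    have hαL := hα.mono (Set.Icc_subset_Icc_right (a₂ := L.nodes) (by simp only [nodes]; omega))
    have hαR := hα.mono (Set.Icc_subset_Icc_right (a₂ := R.nodes) (by simp only [nodes]; omega))
    by_cases hX : X.nodes = L.nodes
    · have hsub := pairing_node_sub (α := α) (w := w) hX (show Y.nodes = R.nodes by omega)
      by_cases hXL : X = L
      · subst hXL
        have := pairing_lt_of_strictMonoFor hαR (by omega) (fun h => hne (h ▸ rfl)) hw.right
        linarith
      · have := pairing_lt_of_strictMonoFor hαL hX hXL hw.left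
        have := pairing_le_of_monotoneFor (S := Y) hαR (by omega) hw.right.monotoneFor
        linarith
    · obtain ⟨e₁, e₂⟩ := splitAt_nodes (S := node X Y) (ρ := L.nodes + 1) (by omega)
        (by simp only [nodes]; omega)
      have hsplit := (pairing_le_splitAt (S := node X Y) (w := w) (ρ := L.nodes + 1) (hS ▸ hα)
        (by omega) (by simp only [nodes]; omega)
        fun p h1 h2 => hw.monotoneFor _ _ (anc_node_root h1 (hS ▸ h2))).2
        (hw.lt_root (by simp only [rootLabel]; omega) (by simp only [rootLabel, nodes]; omega)
          (by simp only [rootLabel]; omega))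
      have := pairing_le_of_monotoneFor (w := w) (S := node ((node X Y).splitAt (L.nodes + 1)).1
        ((node X Y).splitAt (L.nodes + 1)).2) hα (by simp only [nodes] at e₁ e₂ ⊢; omega)
        hw.monotoneFor
      linarith

section Maximizers

variable {L R : PBTree}
  (hmax : ∀ S, S.nodes = (node L R).nodes → pairing α w S ≤ pairing α w (node L R))
include hmax

lemma forall_pairing_le_left : ∀ S, S.nodes = L.nodes → pairing α w S ≤ pairing α w L :=
  fun S hS => by
    have := hmax (node S R) (by simp only [nodes, hS])
    have := pairing_node_sub (α := α) (w := w) (B := R) hS rfl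
    linarith

lemma forall_pairing_le_right : ∀ S, S.nodes = R.nodes →
    pairing α (fun k => w (L.nodes + 1 + k)) S ≤ pairing α (fun k => w (L.nodes + 1 + k)) R :=
  fun S hS => by
    have := hmax (node L S) (by simp only [nodes, hS])
    have := pairing_node_sub (α := α) (w := w) (A := L) rfl hS
    linarith

/-- Otherwise the rotation at the root towards the heavier child would increase the pairing. -/
lemma le_root_of_forall_pairing_le (hα : StrictMonoOn α (Set.Icc 1 (node L R).nodes))
    (hL : MonotoneFor L w) (hR : MonotoneFor R (fun k => w (L.nodes + 1 + k))) {i : ℕ}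
    (h1 : 1 ≤ i) (h2 : i ≤ (node L R).nodes) : w i ≤ w (L.nodes + 1) := by
  rcases Nat.lt_trichotomy i (L.nodes + 1) with h | rfl | h
  · cases L with
    | leaf => simp only [nodes] at h; omega
    | node L₁ L₂ =>
      have hα' : StrictMonoOn α (Set.Icc 1 (node L₁ (node L₂ R)).nodes) :=
        hα.mono (Set.Icc_subset_Icc_right (by simp only [nodes]; omega))
      have hrot := hmax (node L₁ (node L₂ R)) (by simp only [nodes]; omega)
      rw [← not_lt, (pairing_rotate_lt_iff hα').not, not_lt] at hrot
      exact ((monotoneFor_node_iff.1 hL).1 i h1 (by omega)).trans hrot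
  · exact le_rfl
  · cases R with
    | leaf => simp only [nodes] at h2; omega
    | node R₁ R₂ =>
      have hα' : StrictMonoOn α (Set.Icc 1 (node L (node R₁ R₂)).nodes) := hα
      have hrot := (pairing_rotate_le_iff hα').1
        (hmax (node (node L R₁) R₂) (by simp only [nodes]; omega))
      have := (monotoneFor_node_iff.1 hR).1 (i - (L.nodes + 1)) (by omega)
        (by simp only [nodes] at h2 ⊢; omega)
      simp only [Nat.add_sub_cancel' h.le] at this
      refine this.trans (le_of_eq_of_le (congrArg w ?_) hrot)
      simp only [nodes]; omega

end Maximizers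

theorem monotoneFor_of_forall_pairing_le : ∀ {T : PBTree} {w : ℕ → ℝ},
    StrictMonoOn α (Set.Icc 1 T.nodes) →
    (∀ S, S.nodes = T.nodes → pairing α w S ≤ pairing α w T) → MonotoneFor T w
  | leaf, _, _, _ => fun _ _ h => h.elim
  | node L R, w, hα, hmax => by
    have hL := monotoneFor_of_forall_pairing_le
      (hα.mono (Set.Icc_subset_Icc_right (by simp only [nodes]; omega)))
      (forall_pairing_le_left hmax)
    have hR := monotoneFor_of_forall_pairing_le
      (hα.mono (Set.Icc_subset_Icc_right (by simp only [nodes]; omega)))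
      (forall_pairing_le_right hmax)
    exact monotoneFor_node_iff.2
      ⟨fun i h1 h2 => le_root_of_forall_pairing_le hmax hα hL hR h1 h2, hL, hR⟩

theorem forall_pairing_le_iff {T : PBTree} (hα : StrictMonoOn α (Set.Icc 1 T.nodes)) :
    (∀ S, S.nodes = T.nodes → pairing α w S ≤ pairing α w T) ↔ MonotoneFor T w :=
  ⟨monotoneFor_of_forall_pairing_le hα, fun hw _ hS => pairing_le_of_monotoneFor hα hS hw⟩

theorem eq_root_of_forall_pairing_eq {L R : PBTree}
    (hα : StrictMonoOn α (Set.Icc 1 (node L R).nodes))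
    (hconst : ∀ S, S.nodes = (node L R).nodes → pairing α w S = pairing α w (node L R))
    (h1 : 1 ≤ i) (h2 : i ≤ (node L R).nodes) : w i = w (L.nodes + 1) := by
  have hw := monotoneFor_of_forall_pairing_le hα fun S hS => (hconst S hS).le
  have hw' := monotoneFor_of_forall_pairing_le (w := fun k => -w k) hα fun S hS => by
    rw [pairing_neg, pairing_neg, hconst S hS]
  exact le_antisymm (hw _ _ (anc_node_root h1 h2))
    (neg_le_neg_iff.1 (hw' _ _ (anc_node_root h1 h2)))

end PBTree
section ConvexHull

variable {𝕜 E : Type*} [Field 𝕜] [LinearOrder 𝕜] [IsStrictOrderedRing 𝕜] [AddCommGroup E]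
  [Module 𝕜 E] {V : Set E} {x : E} (f : E →ₗ[𝕜] 𝕜)

lemma forall_mem_convexHull_le_iff (c : 𝕜) :
    (∀ p ∈ convexHull 𝕜 V, f p ≤ c) ↔ ∀ p ∈ V, f p ≤ c :=
  ⟨fun h p hp => h p (subset_convexHull 𝕜 V hp),
    fun h _ hp => convexHull_min h (convex_halfSpace_le f.isLinear c) hp⟩

lemma eq_of_mem_convexHull_of_le (hV : ∀ y ∈ V, y ≠ x → f y < f x) {p : E}
    (hp : p ∈ convexHull 𝕜 V) (hxp : f x ≤ f p) : p = x := by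
  rcases (V \ {x}).eq_empty_or_nonempty with hempty | hne
  · have : p ∈ convexHull 𝕜 {x} :=
      convexHull_mono (fun y hy => by_contra fun h => hempty.subset ⟨hy, h⟩) hp
    rwa [convexHull_singleton] at this
  · have hsub : convexHull 𝕜 (V \ {x}) ⊆ {y | f y < f x} :=
      convexHull_min (fun y hy => hV y hy.1 hy.2) (convex_halfSpace_lt f.isLinear _)
    have hp := convexHull_mono (Set.subset_insert_sdiff_singleton x V) hp
    rw [convexHull_insert hne, mem_convexJoin] at hp
    obtain ⟨y, hy, q, hq, a, b, ha, hb, hab, rfl⟩ := hp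
    obtain rfl : y = x := hy
    have hfq : f q < f y := hsub hq
    rw [map_add, map_smul, map_smul, smul_eq_mul, smul_eq_mul] at hxp
    rcases hb.eq_or_lt with rfl | hb
    · rw [zero_smul, add_zero, show a = 1 by linarith, one_smul]
    · obtain rfl : a = 1 - b := by linarith
      nlinarith [mul_pos hb (sub_pos.2 hfq)]

lemma mem_extremePoints_convexHull_of_forall_lt (hx : x ∈ V) (hV : ∀ y ∈ V, y ≠ x → f y < f x) :
    x ∈ (convexHull 𝕜 V).extremePoints 𝕜 := by
  have hle := (forall_mem_convexHull_le_iff f (f x)).2 fun y hy =>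
    (eq_or_ne y x).elim (fun h => h ▸ le_rfl) fun h => (hV y hy h).le
  refine mem_extremePoints_iff_left.2 ⟨subset_convexHull 𝕜 V hx, fun x₁ h₁ x₂ h₂ hseg =>
    eq_of_mem_convexHull_of_le f hV h₁ ?_⟩
  obtain ⟨a, b, ha, hb, hab, hx⟩ := hseg
  have hfx := congrArg f hx
  rw [map_add, map_smul, map_smul, smul_eq_mul, smul_eq_mul] at hfx
  by_contra! hlt
  obtain rfl : a = 1 - b := by linarith
  nlinarith [mul_le_mul_of_nonneg_left (hle x₂ h₂) hb.le, mul_lt_mul_of_pos_left hlt ha]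

end ConvexHull

section Loday

open PBTree

variable {n d : ℕ} {α : ℕ → ℝ} {T S : PBTree}

lemma sum_mul_lodayVec (w : ℕ → ℝ) (hT : T.nodes = n) :
    ∑ i : Fin n, w (i + 1) * lodayVec n α T i = pairing α w T := by
  rw [pairing_eq_sum, hT, ← Fin.sum_univ_eq_sum_range]
  rfl

lemma sum_lodayVec (hT : T.nodes = n) : ∑ i, lodayVec n α T i = ∑ k ∈ Icc 1 n, α k := by
  simpa [pairing_one, hT] using sum_mul_lodayVec (α := α) (fun _ => 1) hT

/-- Coordinate `i : Fin n` of a weight becomes the weight of the in-order label `i + 1`. -/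
def liftWeight (w : Fin n → ℝ) (k : ℕ) : ℝ :=
  if h : k - 1 < n then w ⟨k - 1, h⟩ else 0

@[simp] lemma liftWeight_succ (w : Fin n → ℝ) (i : Fin n) : liftWeight w (i + 1) = w i := by
  simp [liftWeight]

lemma dotProduct_lodayVec (w : Fin n → ℝ) (hT : T.nodes = n) :
    w ⬝ᵥ lodayVec n α T = pairing α (liftWeight w) T := by
  simpa [dotProduct] using sum_mul_lodayVec (α := α) (liftWeight w) hT

lemma monotoneFor_liftWeight_iff (w : Fin n → ℝ) (hT : T.nodes = n) :
    MonotoneFor T (liftWeight w) ↔ ∀ i j : Fin n, T.anc (i + 1) (j + 1) → w i ≤ w j := by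
  refine ⟨fun h i j hij => by simpa using h _ _ hij, fun h i j hij => ?_⟩
  obtain ⟨hi, hi', hj, hj'⟩ := anc_bounds hij
  obtain ⟨i, rfl⟩ : ∃ i' : ℕ, i = i' + 1 := ⟨i - 1, by omega⟩
  obtain ⟨j, rfl⟩ : ∃ j' : ℕ, j = j' + 1 := ⟨j - 1, by omega⟩
  have := h ⟨i, by omega⟩ ⟨j, by omega⟩ hij
  rwa [← liftWeight_succ w, ← liftWeight_succ w] at this

lemma sum_neg_depth_mul_lodayVec_lt (hα : StrictMonoOn α (Set.Icc 1 n)) (hT : T.nodes = n)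
    (hS : S.nodes = n) (hne : S ≠ T) :
    ∑ i : Fin n, -(T.depth (i + 1) : ℝ) * lodayVec n α S i <
      ∑ i : Fin n, -(T.depth (i + 1) : ℝ) * lodayVec n α T i := by
  rw [sum_mul_lodayVec (fun k => -(T.depth k : ℝ)) hS,
    sum_mul_lodayVec (fun k => -(T.depth k : ℝ)) hT]
  exact pairing_lt_of_strictMonoFor (hT ▸ hα) (hS.trans hT.symm) hne (strictMonoFor_neg_depth T)

theorem eq_of_lodayVec_eq {T' : PBTree} (hα : StrictMonoOn α (Set.Icc 1 n)) (hT : T.nodes = n)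
    (hT' : T'.nodes = n) (h : lodayVec n α T = lodayVec n α T') : T = T' := by
  by_contra hne
  have := sum_neg_depth_mul_lodayVec_lt hα hT hT' (Ne.symm hne)
  rw [h] at this
  exact lt_irrefl _ this

theorem extremePoints_convexHull_lodayVerts (hα : StrictMonoOn α (Set.Icc 1 (d + 1))) :
    (convexHull ℝ (lodayVerts d α)).extremePoints ℝ = lodayVerts d α := by
  refine extremePoints_convexHull_subset.antisymm ?_
  rintro _ ⟨T, hT, rfl⟩
  refine mem_extremePoints_convexHull_of_forall_lt
    (dotProductEquiv ℝ (Fin (d + 1)) fun i => -(T.depth (i + 1) : ℝ)) ⟨T, hT, rfl⟩ ?_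
  rintro _ ⟨S, hS, rfl⟩ hne
  exact sum_neg_depth_mul_lodayVec_lt hα hT hS fun h => hne (h ▸ rfl)

theorem normalCone_lodayVerts (hα : StrictMonoOn α (Set.Icc 1 (d + 1))) (hT : T.nodes = d + 1) :
    {w : Fin (d + 1) → ℝ | ∀ p ∈ convexHull ℝ (lodayVerts d α),
        (∑ i, w i * p i) ≤ ∑ i, w i * lodayVec (d + 1) α T i}
      = {w | ∀ i j : Fin (d + 1), T.anc (i.1 + 1) (j.1 + 1) → w i ≤ w j} := by
  ext w
  rw [Set.mem_ofPred_eq, Set.mem_ofPred_eq, ← monotoneFor_liftWeight_iff w hT,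
    ← forall_pairing_le_iff (hT ▸ hα)]
  change (∀ p ∈ _, dotProductEquiv ℝ _ w p ≤ w ⬝ᵥ lodayVec _ α T) ↔ _
  rw [forall_mem_convexHull_le_iff]
  constructor
  · intro h S hS
    rw [← dotProduct_lodayVec w (hS.trans hT), ← dotProduct_lodayVec w hT]
    exact h _ ⟨S, hS.trans hT, rfl⟩
  · rintro h _ ⟨S, hS, rfl⟩
    rw [dotProductEquiv_apply_apply, dotProduct_lodayVec w hS, dotProduct_lodayVec w hT]
    exact h S (hS.trans hT.symm)

lemma eq_of_forall_dotProduct_lodayVec_eq (hα : StrictMonoOn α (Set.Icc 1 (d + 1)))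
    (hT : T.nodes = d + 1) (w : Fin (d + 1) → ℝ)
    (hw : ∀ S, S.nodes = d + 1 → w ⬝ᵥ lodayVec (d + 1) α S = w ⬝ᵥ lodayVec (d + 1) α T)
    (i j : Fin (d + 1)) : w i = w j := by
  obtain ⟨L, R, rfl⟩ : ∃ L R, T = node L R := by
    cases T with
    | leaf => simp [nodes] at hT
    | node L R => exact ⟨L, R, rfl⟩
  have key : ∀ i : Fin (d + 1), w i = liftWeight w (L.nodes + 1) := fun i => by
    rw [← liftWeight_succ w i]
    refine eq_root_of_forall_pairing_eq (hT ▸ hα) (fun S hS => ?_) (by omega) (by omega)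
    rw [← dotProduct_lodayVec w (hS.trans hT), ← dotProduct_lodayVec w hT]
    exact hw S (hS.trans hT)
  rw [key i, key j]

/-- Dually: a linear form vanishing on the differences of the vertices is a multiple of
`∑ i, x i`, as it is constant on the coordinates. -/
lemma mem_vectorSpan_lodayVerts (hα : StrictMonoOn α (Set.Icc 1 (d + 1))) {y : Fin (d + 1) → ℝ}
    (hy : ∑ i, y i = 0) : y ∈ vectorSpan ℝ (lodayVerts d α) := by
  by_contra hy'
  obtain ⟨f, hfy, hf⟩ := Submodule.exists_dual_map_eq_bot_of_notMem hy' inferInstance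
  set w := (dotProductEquiv ℝ (Fin (d + 1))).symm f
  have hfw : ∀ z, f z = w ⬝ᵥ z := fun z => by
    rw [← dotProductEquiv_apply_apply, LinearEquiv.apply_symm_apply]
  obtain ⟨T, hT⟩ := exists_nodes_eq (d + 1)
  have hconst := eq_of_forall_dotProduct_lodayVec_eq hα hT w fun S hS => by
    have := Submodule.mem_map_of_mem (f := f) (vsub_mem_vectorSpan ℝ
      (show lodayVec (d + 1) α S ∈ lodayVerts d α from ⟨S, hS, rfl⟩) ⟨T, hT, rfl⟩)
    rwa [hf, Submodule.mem_bot, vsub_eq_sub, map_sub, sub_eq_zero, hfw, hfw] at this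
  apply hfy
  rw [hfw, dotProduct, sum_congr rfl fun i _ => by rw [hconst i 0], ← mul_sum, hy, mul_zero]

theorem affineSpan_lodayVerts (hα : StrictMonoOn α (Set.Icc 1 (d + 1))) :
    (affineSpan ℝ (lodayVerts d α) : Set (Fin (d + 1) → ℝ))
      = {x | ∑ i, x i = ∑ k ∈ Icc 1 (d + 1), α k} := by
  obtain ⟨T, hT⟩ := exists_nodes_eq (d + 1)
  ext x
  constructor
  · refine fun hx => affineSpan_induction hx (fun _ ⟨S, hS, e⟩ => e ▸ sum_lodayVec hS) ?_
    intro c u v w hu hv hw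
    simp only [Set.mem_ofPred_eq, vsub_eq_sub, vadd_eq_add, Pi.add_apply, Pi.smul_apply,
      Pi.sub_apply, smul_eq_mul, sum_add_distrib, ← mul_sum, sum_sub_distrib] at hu hv hw ⊢
    rw [hu, hv, hw, sub_self, mul_zero, zero_add]
  · intro hx
    rw [← vsub_vadd x (lodayVec (d + 1) α T)]
    refine AffineSubspace.vadd_mem_of_mem_direction ?_ (subset_affineSpan ℝ _ ⟨T, hT, rfl⟩)
    rw [direction_affineSpan]
    refine mem_vectorSpan_lodayVerts hα ?_
    rw [Set.mem_ofPred_eq] at hx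
    simp [sum_sub_distrib, hx, sum_lodayVec hT]

end Loday

/-- Proposition 4.10: for strictly increasing `α ∈ ℝ^{d+1}`, the points `v_T^α` are pairwise
distinct and are exactly the extreme points of `LodAsso(α)`, the affine span of `LodAsso(α)` is
the hyperplane `Σ x_i = Σ α_i`, and the normal cone of `LodAsso(α)` at `v_T^α` is the cone
`{w : w_i ≤ w_j whenever i ≼_T j}`. -/
theorem loday_associahedron (d : ℕ) (α : ℕ → ℝ)
    (hα : ∀ i j : ℕ, 1 ≤ i → i < j → j ≤ d + 1 → α i < α j) :
    (∀ T T' : PBTree, T.nodes = d + 1 → T'.nodes = d + 1 →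
        lodayVec (d + 1) α T = lodayVec (d + 1) α T' → T = T') ∧
    Set.extremePoints ℝ (convexHull ℝ (lodayVerts d α)) = lodayVerts d α ∧
    (affineSpan ℝ (convexHull ℝ (lodayVerts d α)) : Set (Fin (d + 1) → ℝ))
      = {x | (∑ i, x i) = ∑ k ∈ Finset.Icc 1 (d + 1), α k} ∧
    ∀ T : PBTree, T.nodes = d + 1 →
      {w : Fin (d + 1) → ℝ | ∀ p ∈ convexHull ℝ (lodayVerts d α),
          (∑ i, w i * p i) ≤ ∑ i, w i * lodayVec (d + 1) α T i}
        = {w | ∀ i j : Fin (d + 1), T.anc (i.1 + 1) (j.1 + 1) → w i ≤ w j} := by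
  have hα' : StrictMonoOn α (Set.Icc 1 (d + 1)) := fun i hi j hj hij => hα i j hi.1 hij hj.2
  refine ⟨fun T T' hT hT' => eq_of_lodayVec_eq hα' hT hT',
    extremePoints_convexHull_lodayVerts hα', ?_, fun T hT => normalCone_lodayVerts hα' hT⟩
  rw [affineSpan_convexHull]
  exact affineSpan_lodayVerts hα'
end

section
/- For every n ≥ 1, the cones σ(T) := {w ∈ ℝ^n : w_i ≤ w_j whenever i ≼_T j}, as T ranges over all plane binary trees with n internal nodes, cover ℝ^n, and for distinct trees T ≠ T' the open parts σ°(T) := {w ∈ ℝ^n : w_i < w_j whenever the internal node labeled i is a child of the internal node labeled j in T} and σ°(T') are disjoint. -/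
/-- The cone `σ(T) = {w ∈ ℝ^n : w_i ≤ w_j whenever i ≼_T j}` of a plane binary tree. -/
def treeCone (n : ℕ) (T : PBTree) : Set (Fin n → ℝ) :=
  {w | ∀ i j : Fin n, T.anc (i.1 + 1) (j.1 + 1) → w i ≤ w j}

/-- The open part `σ°(T) = {w ∈ ℝ^n : w_i < w_j whenever the internal node labeled i is a
child of the internal node labeled j in T}`. -/
def treeConeOpen (n : ℕ) (T : PBTree) : Set (Fin n → ℝ) :=
  {w | ∀ i j : Fin n, T.childOf (i.1 + 1) (j.1 + 1) → w i < w j}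

/-! On `σ°(T)` the coordinate of the root is the strict maximum, so a vector in `σ°(T)`
determines the root label of `T`; recursing into the two subtrees, it determines `T`.
Conversely, putting a maximal coordinate at the root and recursing on the coordinates to
its left and to its right builds a tree whose cone `σ(T)` contains a given vector. -/

namespace PBTree

lemma eq_leaf_of_nodes_eq_zero_s10 {T : PBTree} (h : T.nodes = 0) : T = leaf := by
  cases T <;> simp_all [nodes]

lemma rootLabel_bounds {T : PBTree} (h : T ≠ leaf) :
    1 ≤ T.rootLabel ∧ T.rootLabel ≤ T.nodes := by
  cases T with
  | leaf => exact absurd rfl h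
  | node l r => simp only [rootLabel, nodes]; omega

lemma one_le_of_anc {T : PBTree} {i j : ℕ} (h : T.anc i j) : 1 ≤ i ∧ 1 ≤ j := by
  induction T generalizing i j with
  | leaf => exact h.elim
  | node l r ihl ihr =>
    rcases h with ⟨hj, hi, -⟩ | h | h
    · omega
    · exact ihl h
    · have := ihr h; omega

lemma childOf_bounds {T : PBTree} {i j : ℕ} (h : T.childOf i j) :
    1 ≤ i ∧ i ≤ T.nodes ∧ 1 ≤ j ∧ j ≤ T.nodes := by
  induction T generalizing i j with
  | leaf => exact h.elim
  | node l r ihl ihr =>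
    simp only [nodes]
    rcases h with ⟨hj, ⟨hl, hi⟩ | ⟨hr, hi⟩⟩ | h | h
    · have := rootLabel_bounds hl; omega
    · have := rootLabel_bounds hr; omega
    · have := ihl h; omega
    · have := ihr h; omega

section childOf_node

variable {l r : PBTree}

lemma childOf_node_left {i j : ℕ} (h : l.childOf i j) : (node l r).childOf i j :=
  Or.inr (Or.inl h)

lemma childOf_node_right {i j : ℕ} (h : r.childOf i j) :
    (node l r).childOf (i + (l.nodes + 1)) (j + (l.nodes + 1)) :=
  Or.inr (Or.inr (by simpa using h))

lemma childOf_node_rootLabel_left (hl : l ≠ leaf) :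
    (node l r).childOf l.rootLabel (l.nodes + 1) :=
  Or.inl ⟨rfl, Or.inl ⟨hl, rfl⟩⟩

lemma childOf_node_rootLabel_right (hr : r ≠ leaf) :
    (node l r).childOf (r.rootLabel + (l.nodes + 1)) (l.nodes + 1) :=
  Or.inl ⟨rfl, Or.inr ⟨hr, by omega⟩⟩

end childOf_node

lemma lt_rootLabel {T : PBTree} {w : ℕ → ℝ} (hw : ∀ i j, T.childOf i j → w i < w j)
    {i : ℕ} (hi₁ : 1 ≤ i) (hi₂ : i ≤ T.nodes) (hne : i ≠ T.rootLabel) :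
    w i < w T.rootLabel := by
  induction T generalizing w i with
  | leaf => simp only [nodes] at hi₂; omega
  | node l r ihl ihr =>
    simp only [nodes] at hi₂
    simp only [rootLabel] at hne ⊢
    by_cases hil : i ≤ l.nodes
    · have hl : l ≠ leaf := by rintro rfl; simp only [nodes] at hil; omega
      have hroot := hw _ _ (childOf_node_rootLabel_left (r := r) hl)
      rcases eq_or_ne i l.rootLabel with rfl | hne'
      · exact hroot
      · exact (ihl (fun a b h => hw a b (childOf_node_left h)) hi₁ hil hne').trans hroot
    · obtain ⟨k, rfl⟩ : ∃ k, i = k + (l.nodes + 1) := ⟨i - (l.nodes + 1), by omega⟩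
      have hr : r ≠ leaf := by rintro rfl; simp only [nodes] at hi₂; omega
      have hroot := hw _ _ (childOf_node_rootLabel_right (l := l) hr)
      rcases eq_or_ne k r.rootLabel with rfl | hne'
      · exact hroot
      · have hw' : ∀ a b, r.childOf a b → w (a + (l.nodes + 1)) < w (b + (l.nodes + 1)) :=
          fun a b h => hw _ _ (childOf_node_right h)
        exact (ihr hw' (by omega) (by omega) hne').trans hroot

lemma rootLabel_eq_of_childOf_lt {T T' : PBTree} (hT : T ≠ leaf) (hn : T.nodes = T'.nodes)
    {w : ℕ → ℝ} (hw : ∀ i j, T.childOf i j → w i < w j)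
    (hw' : ∀ i j, T'.childOf i j → w i < w j) : T.rootLabel = T'.rootLabel := by
  have hT' : T' ≠ leaf := fun h => hT (eq_leaf_of_nodes_eq_zero_s10 (by simp [hn, h, nodes]))
  have hb := rootLabel_bounds hT
  have hb' := rootLabel_bounds hT'
  by_contra hne
  have h₁ := lt_rootLabel hw hb'.1 (hn ▸ hb'.2) (Ne.symm hne)
  have h₂ := lt_rootLabel hw' hb.1 (hn ▸ hb.2) hne
  exact lt_asymm h₁ h₂

theorem eq_of_childOf_lt {T T' : PBTree} (hn : T.nodes = T'.nodes) {w : ℕ → ℝ}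
    (hw : ∀ i j, T.childOf i j → w i < w j) (hw' : ∀ i j, T'.childOf i j → w i < w j) :
    T = T' := by
  induction T generalizing T' w with
  | leaf => exact (eq_leaf_of_nodes_eq_zero_s10 hn.symm).symm
  | node l r ihl ihr =>
    cases T' with
    | leaf => simp [nodes] at hn
    | node l' r' =>
      simp only [nodes] at hn
      have hroot : l.nodes = l'.nodes := by
        have := rootLabel_eq_of_childOf_lt (by simp) (by simp only [nodes]; omega) hw hw'
        simpa [rootLabel] using this
      have hl : l = l' :=
        ihl hroot (fun i j h => hw i j (childOf_node_left h))
          (fun i j h => hw' i j (childOf_node_left h))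
      have hr : r = r' :=
        ihr (w := fun k => w (k + (l.nodes + 1))) (by omega)
          (fun i j h => hw _ _ (childOf_node_right h))
          (fun i j h => hroot ▸ hw' _ _ (childOf_node_right h))
      rw [hl, hr]

theorem exists_nodes_eq_anc_le (n : ℕ) (w : ℕ → ℝ) :
    ∃ T : PBTree, T.nodes = n ∧ ∀ i j, T.anc i j → w i ≤ w j := by
  induction n using Nat.strong_induction_on generalizing w with
  | _ n ih =>
    rcases Nat.eq_zero_or_pos n with rfl | hpos
    · exact ⟨leaf, rfl, fun i j h => h.elim⟩
    obtain ⟨m, hm, hmax⟩ := Finset.exists_max_image (Finset.Icc 1 n) w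
      ⟨1, Finset.mem_Icc.mpr ⟨le_rfl, hpos⟩⟩
    rw [Finset.mem_Icc] at hm
    obtain ⟨L, hL, hLanc⟩ := ih (m - 1) (by omega) w
    obtain ⟨R, hR, hRanc⟩ := ih (n - m) (by omega) (fun k => w (k + m))
    refine ⟨node L R, by simp only [nodes]; omega, ?_⟩
    rintro i j (⟨hj, hi₁, hi₂⟩ | h | h)
    · obtain rfl : j = m := by omega
      exact hmax i (Finset.mem_Icc.mpr ⟨hi₁, by omega⟩)
    · exact hLanc i j h
    · have := one_le_of_anc h
      have hij := hRanc _ _ h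
      rwa [show i - (L.nodes + 1) + m = i by omega,
        show j - (L.nodes + 1) + m = j by omega] at hij

end PBTree

def onLabels (n : ℕ) (w : Fin n → ℝ) (k : ℕ) : ℝ :=
  if h : k - 1 < n then w ⟨k - 1, h⟩ else 0

lemma onLabels_add_one {n : ℕ} (w : Fin n → ℝ) {k : ℕ} (hk : k < n) :
    onLabels n w (k + 1) = w ⟨k, hk⟩ := by
  simp [onLabels, hk]

lemma mem_treeCone_of_anc_le {n : ℕ} {T : PBTree} {w : Fin n → ℝ}
    (h : ∀ i j, T.anc i j → onLabels n w i ≤ onLabels n w j) : w ∈ treeCone n T := by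
  intro i j hij
  simpa only [onLabels_add_one w i.2, onLabels_add_one w j.2] using h _ _ hij

lemma childOf_lt_of_mem_treeConeOpen {n : ℕ} {T : PBTree} (hT : T.nodes = n)
    {w : Fin n → ℝ} (hw : w ∈ treeConeOpen n T) :
    ∀ i j, T.childOf i j → onLabels n w i < onLabels n w j := by
  intro i j hij
  obtain ⟨hi₁, hi₂, hj₁, hj₂⟩ := PBTree.childOf_bounds hij
  obtain ⟨i, rfl⟩ : ∃ k, i = k + 1 := ⟨i - 1, by omega⟩
  obtain ⟨j, rfl⟩ : ∃ k, j = k + 1 := ⟨j - 1, by omega⟩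
  rw [onLabels_add_one w (by omega), onLabels_add_one w (by omega)]
  exact hw ⟨i, by omega⟩ ⟨j, by omega⟩ hij

theorem tree_cones_dissect_general (n : ℕ) :
    (⋃ T ∈ {T : PBTree | T.nodes = n}, treeCone n T) = Set.univ ∧
    ∀ T T' : PBTree, T.nodes = n → T'.nodes = n → T ≠ T' →
      Disjoint (treeConeOpen n T) (treeConeOpen n T') := by
  constructor
  · refine Set.eq_univ_of_forall fun w => ?_
    obtain ⟨T, hT, hle⟩ := PBTree.exists_nodes_eq_anc_le n (onLabels n w)
    exact Set.mem_biUnion (show T ∈ {T : PBTree | T.nodes = n} from hT)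
      (mem_treeCone_of_anc_le hle)
  · intro T T' hT hT' hne
    refine Set.disjoint_left.2 fun w hw hw' => hne ?_
    exact PBTree.eq_of_childOf_lt (hT.trans hT'.symm)
      (childOf_lt_of_mem_treeConeOpen hT hw) (childOf_lt_of_mem_treeConeOpen hT' hw')

/-- Lemma 4.5: for every `n ≥ 1`, the cones `σ(T)`, over plane binary trees `T` with `n`
internal nodes, cover `ℝ^n`, and the open parts of distinct trees are disjoint. -/
theorem tree_cones_dissect (n : ℕ) (hn : 1 ≤ n) :
    (⋃ T ∈ {T : PBTree | T.nodes = n}, treeCone n T) = Set.univ ∧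
    ∀ T T' : PBTree, T.nodes = n → T'.nodes = n → T ≠ T' →
      Disjoint (treeConeOpen n T) (treeConeOpen n T') :=
  tree_cones_dissect_general n
end
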